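/- arXiv:1911.08710 — 3 statements merged into one kernel-verified Lean document; each statement's English description precedes it below -/
import Mathlib

section
/- Let M be a d×d Hermitian matrix, x ∈ ℂ^d nonzero, τ2, τ3, δ reals with τ3 > 0 and ‖M − τ2‖x‖²I − τ3 x x*‖ ≤ δ‖x‖². Let z̃ be a unit eigenvector of M corresponding to its largest eigenvalue λ. Then |z̃* x|² / ‖x‖² ≥ 1 − 2δ/τ3. -/
/-!
Write `S = M - c - τ₃ x x*` with `c = τ₂‖x‖²`, so that `|⟪v, S v⟫| ≤ δ‖x‖²‖v‖²` for every `v`.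
At the top eigenvector `z` this reads `λ - c - τ₃|⟪z, x⟫|² ≤ δ‖x‖²`; at `x` itself, together with
the Rayleigh bound `⟪x, M x⟫ ≤ λ‖x‖²`, it gives `λ‖x‖² - c‖x‖² - τ₃‖x‖⁴ ≥ -δ‖x‖⁴`.
Eliminating `λ - c` yields `τ₃ (‖x‖² - |⟪z, x⟫|²) ≤ 2δ‖x‖²`.
-/

open Matrix

open InnerProductSpace RCLike
open scoped MatrixOrder

section RankOnePerturbation

variable {𝕜 E : Type*} [RCLike 𝕜] [NormedAddCommGroup E] [InnerProductSpace 𝕜 E]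

lemma abs_re_inner_self_apply_le (S : E →L[𝕜] E) (v : E) :
    |re (inner 𝕜 v (S v))| ≤ ‖S‖ * ‖v‖ ^ 2 :=
  calc |re (inner 𝕜 v (S v))| ≤ ‖v‖ * ‖S v‖ := (abs_re_le_norm _).trans (norm_inner_le_norm _ _)
    _ ≤ ‖v‖ * (‖S‖ * ‖v‖) := by gcongr; exact S.le_opNorm v
    _ = ‖S‖ * ‖v‖ ^ 2 := by ring

lemma re_inner_sub_smul_one_sub_smul_rankOne_apply (T : E →L[𝕜] E) (c τ : ℝ) (x v : E) :
    re (inner 𝕜 v ((T - (c : 𝕜) • 1 - (τ : 𝕜) • rankOne 𝕜 x x) v)) =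
      re (inner 𝕜 v (T v)) - c * ‖v‖ ^ 2 - τ * ‖inner 𝕜 x v‖ ^ 2 := by
  have hx : inner 𝕜 x v * inner 𝕜 v x = ((‖inner 𝕜 x v‖ ^ 2 : ℝ) : 𝕜) := by
    rw [← inner_conj_symm v x, RCLike.mul_conj, ofReal_pow]
  simp only [_root_.sub_apply, _root_.smul_apply, one_apply_eq_self, rankOne_apply,
    inner_sub_right, inner_smul_right, inner_self_eq_norm_sq_to_K, hx, ← ofReal_pow,
    ← ofReal_mul, map_sub, ofReal_re]

theorem mul_sub_norm_inner_sq_le_of_norm_sub_rankOne_le {T : E →L[𝕜] E} {lam c τ ε : ℝ}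
    {x z : E} (hx : x ≠ 0) (hT : ∀ v, re (inner 𝕜 v (T v)) ≤ lam * ‖v‖ ^ 2)
    (hz : T z = (lam : 𝕜) • z) (hz1 : ‖z‖ = 1)
    (hS : ‖T - (c : 𝕜) • 1 - (τ : 𝕜) • rankOne 𝕜 x x‖ ≤ ε) :
    τ * (‖x‖ ^ 2 - ‖inner 𝕜 z x‖ ^ 2) ≤ 2 * ε := by
  have hTz : re (inner 𝕜 z (T z)) = lam := by simp [hz, inner_smul_right, hz1]
  have hxx : ‖inner 𝕜 x x‖ = ‖x‖ ^ 2 := by simp [inner_self_eq_norm_sq_to_K]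
  have hSz := abs_re_inner_self_apply_le (T - (c : 𝕜) • 1 - (τ : 𝕜) • rankOne 𝕜 x x) z
  have hSx := abs_re_inner_self_apply_le (T - (c : 𝕜) • 1 - (τ : 𝕜) • rankOne 𝕜 x x) x
  rw [re_inner_sub_smul_one_sub_smul_rankOne_apply, hTz, hz1, norm_inner_symm] at hSz
  rw [re_inner_sub_smul_one_sub_smul_rankOne_apply, hxx] at hSx
  have hx2 : 0 < ‖x‖ ^ 2 := by positivity
  have key : ‖x‖ ^ 2 * (τ * (‖x‖ ^ 2 - ‖inner 𝕜 z x‖ ^ 2)) ≤ ‖x‖ ^ 2 * (2 * ε) := by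
    nlinarith [le_of_abs_le hSz, neg_le_of_abs_le hSx, hT x]
  exact le_of_mul_le_mul_left key hx2

end RankOnePerturbation

section HermitianMatrix

variable {𝕜 n : Type*} [RCLike 𝕜] [Fintype n] [DecidableEq n]

lemma Matrix.IsHermitian.le_algebraMap_iSup_eigenvalues {A : Matrix n n 𝕜} (hA : A.IsHermitian) :
    A ≤ algebraMap ℝ _ (⨆ i, hA.eigenvalues i) := by
  refine le_algebraMap_of_spectrum_le ?_ hA
  rw [hA.spectrum_real_eq_range_eigenvalues]
  rintro _ ⟨i, rfl⟩
  exact le_ciSup (Set.finite_range _).bddAbove i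

lemma Matrix.IsHermitian.re_inner_toEuclideanCLM_le {A : Matrix n n 𝕜} (hA : A.IsHermitian)
    (v : EuclideanSpace 𝕜 n) :
    re (inner 𝕜 v (toEuclideanCLM (𝕜 := 𝕜) A v)) ≤ (⨆ i, hA.eigenvalues i) * ‖v‖ ^ 2 := by
  have h := (isPositive_toEuclideanLin_iff.mpr
    (le_iff.mp hA.le_algebraMap_iSup_eigenvalues)).re_inner_nonneg_right v
  rw [map_sub, LinearMap.sub_apply, inner_sub_right, map_sub, sub_nonneg,
    IsScalarTower.algebraMap_apply ℝ 𝕜, Algebra.algebraMap_eq_smul_one, map_smul,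
    LinearMap.smul_apply, toLpLin_one, LinearMap.id_apply, inner_smul_right,
    inner_self_eq_norm_sq_to_K] at h
  rw [← ContinuousLinearMap.coe_coe, coe_toEuclideanCLM_eq_toEuclideanLin]
  simpa using h

lemma Matrix.toEuclideanCLM_vecMulVec (x y : EuclideanSpace 𝕜 n) :
    toEuclideanCLM (𝕜 := 𝕜) (vecMulVec x.ofLp (star y.ofLp)) = rankOne 𝕜 x y := by
  rw [← InnerProductSpace.symm_toEuclideanLin_rankOne]
  ext1 v
  rw [← ContinuousLinearMap.coe_coe, coe_toEuclideanCLM_eq_toEuclideanLin,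
    LinearEquiv.apply_symm_apply, ContinuousLinearMap.coe_coe]

end HermitianMatrix

theorem stmt_9_general (d : ℕ) (M : Matrix (Fin d) (Fin d) ℂ)
    (hM : M.IsHermitian) (x : EuclideanSpace ℂ (Fin d)) (hx : x ≠ 0)
    (τ2 τ3 δ : ℝ) (hτ3 : 0 < τ3)
    (hnorm : ‖Matrix.toEuclideanCLM (𝕜 := ℂ)
        (M - ((τ2 * ‖x‖ ^ 2 : ℝ) : ℂ) • (1 : Matrix (Fin d) (Fin d) ℂ)
          - (τ3 : ℂ) • vecMulVec (fun i => x i) (star fun i => x i))‖ ≤ δ * ‖x‖ ^ 2)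
    (lam : ℝ) (hlam : lam = ⨆ i, hM.eigenvalues i)
    (z : EuclideanSpace ℂ (Fin d)) (hz : ‖z‖ = 1)
    (heig : Matrix.toEuclideanCLM (𝕜 := ℂ) M z = (lam : ℂ) • z) :
    1 - 2 * δ / τ3 ≤ ‖(inner ℂ z x : ℂ)‖ ^ 2 / ‖x‖ ^ 2 := by
  have hT (v : EuclideanSpace ℂ (Fin d)) :
      re (inner ℂ v (toEuclideanCLM (𝕜 := ℂ) M v)) ≤ lam * ‖v‖ ^ 2 :=
    hlam ▸ hM.re_inner_toEuclideanCLM_le v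
  rw [map_sub, map_sub, map_smul, map_smul, map_one, toEuclideanCLM_vecMulVec] at hnorm
  have key := mul_sub_norm_inner_sq_le_of_norm_sub_rankOne_le hx hT heig hz hnorm
  calc 1 - 2 * δ / τ3 = (τ3 * ‖x‖ ^ 2 - 2 * (δ * ‖x‖ ^ 2)) / τ3 / ‖x‖ ^ 2 := by
        field_simp [norm_ne_zero_iff.mpr hx]
    _ ≤ τ3 * ‖inner ℂ z x‖ ^ 2 / τ3 / ‖x‖ ^ 2 := by gcongr; linarith
    _ = ‖inner ℂ z x‖ ^ 2 / ‖x‖ ^ 2 := by rw [mul_div_cancel_left₀ _ hτ3.ne']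

/-- under the operator-norm bound, a unit top eigenvector `z` of `M`
satisfies `|z* x|²/‖x‖² ≥ 1 − 2δ/τ3`. -/
theorem stmt_9 (d : ℕ) (hd : 0 < d) (M : Matrix (Fin d) (Fin d) ℂ)
    (hM : M.IsHermitian) (x : EuclideanSpace ℂ (Fin d)) (hx : x ≠ 0)
    (τ2 τ3 δ : ℝ) (hτ3 : 0 < τ3)
    (hnorm : ‖Matrix.toEuclideanCLM (𝕜 := ℂ)
        (M - ((τ2 * ‖x‖ ^ 2 : ℝ) : ℂ) • (1 : Matrix (Fin d) (Fin d) ℂ)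
          - (τ3 : ℂ) • vecMulVec (fun i => x i) (star fun i => x i))‖ ≤ δ * ‖x‖ ^ 2)
    (lam : ℝ) (hlam : lam = ⨆ i, hM.eigenvalues i)
    (z : EuclideanSpace ℂ (Fin d)) (hz : ‖z‖ = 1)
    (heig : Matrix.toEuclideanCLM (𝕜 := ℂ) M z = (lam : ℂ) • z) :
    1 - 2 * δ / τ3 ≤ ‖(inner ℂ z x : ℂ)‖ ^ 2 / ‖x‖ ^ 2 :=
  stmt_9_general d M hM x hx τ2 τ3 δ hτ3 hnorm lam hlam z hz heig
end

section
/- Let x ∈ ℂ^d be a unit vector, z̃₀ a unit vector with (Re(z̃₀* x))² ≥ |z̃₀* x|² ≥ 1 − 2δ/τ3 and Re(z̃₀* x) ≥ 0, and let ρ > 0 satisfy (1−δ) ≤ ρ² ≤ (1+δ), where 0 < δ < min(1, τ3/2) and τ3 > 0. Set z₀ = ρ·z̃₀. Then dist(z₀, x)² := min over θ of ‖z₀ − e^{iθ}x‖² satisfies dist(z₀,x)² ≤ (1+δ) + 1 − 2√(1−δ)·√(1 − 2δ/τ3) ≤ (3 + 4/τ3)·δ. -/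
open scoped ComplexConjugate

/-- distance bound for the spectral initialization `z₀ = ρ z̃₀`. -/
theorem stmt_10 (d : ℕ) (x z₀' : EuclideanSpace ℂ (Fin d))
    (hx : ‖x‖ = 1) (hz' : ‖z₀'‖ = 1)
    (τ3 δ ρ : ℝ) (hτ3 : 0 < τ3) (hδ0 : 0 < δ) (hδ1 : δ < 1) (hδτ : δ < τ3 / 2)
    (hcorr : 1 - 2 * δ / τ3 ≤ ‖(inner ℂ z₀' x : ℂ)‖ ^ 2)
    (hre2 : ‖(inner ℂ z₀' x : ℂ)‖ ^ 2 ≤ ((inner ℂ z₀' x : ℂ)).re ^ 2)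
    (hre : 0 ≤ ((inner ℂ z₀' x : ℂ)).re)
    (hρ : 0 < ρ) (hρl : 1 - δ ≤ ρ ^ 2) (hρu : ρ ^ 2 ≤ 1 + δ)
    (z₀ : EuclideanSpace ℂ (Fin d)) (hz₀ : z₀ = (ρ : ℂ) • z₀') :
    (⨅ θ : ℝ, ‖z₀ - Complex.exp (θ * Complex.I) • x‖ ^ 2) ≤
        (1 + δ) + 1 - 2 * Real.sqrt (1 - δ) * Real.sqrt (1 - 2 * δ / τ3) ∧
      (1 + δ) + 1 - 2 * Real.sqrt (1 - δ) * Real.sqrt (1 - 2 * δ / τ3) ≤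
        (3 + 4 / τ3) * δ := by
  have ha0 : (0:ℝ) ≤ 1 - δ := by linarith
  have hb0 : (0:ℝ) ≤ 1 - 2 * δ / τ3 := by
    have : 2 * δ / τ3 ≤ 1 := by
      rw [div_le_one hτ3]; linarith
    linarith
  constructor
  · -- bound infimum by the value at θ = 0
    have hbdd : BddBelow (Set.range fun θ : ℝ => ‖z₀ - Complex.exp (θ * Complex.I) • x‖ ^ 2) := by
      refine ⟨0, ?_⟩
      rintro y ⟨θ, rfl⟩
      positivity
    have hRe : Real.sqrt (1 - 2 * δ / τ3) ≤ ((inner ℂ z₀' x : ℂ)).re := by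
      have := Real.sqrt_le_sqrt (le_trans hcorr hre2)
      rwa [Real.sqrt_sq hre] at this
    have hρs : Real.sqrt (1 - δ) ≤ ρ := by
      have := Real.sqrt_le_sqrt hρl
      rwa [Real.sqrt_sq hρ.le] at this
    have key : ‖z₀ - Complex.exp ((0:ℝ) * Complex.I) • x‖ ^ 2 ≤
        (1 + δ) + 1 - 2 * Real.sqrt (1 - δ) * Real.sqrt (1 - 2 * δ / τ3) := by
      have h0 : Complex.exp ((0:ℝ) * Complex.I) = 1 := by simp
      rw [h0, one_smul]
      have hsq : ‖z₀ - x‖ ^ 2 = ‖z₀‖ ^ 2 - 2 * ((inner ℂ z₀ x : ℂ)).re + ‖x‖ ^ 2 := by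
        have := @norm_sub_sq ℂ _ _ _ _ z₀ x
        simpa using this
      have hzn : ‖z₀‖ = ρ := by
        rw [hz₀, norm_smul, hz']
        simp [abs_of_pos hρ]
      have hinner : ((inner ℂ z₀ x : ℂ)).re = ρ * ((inner ℂ z₀' x : ℂ)).re := by
        rw [hz₀, inner_smul_left]
        simp
      rw [hsq, hzn, hinner, hx]
      have hmul : Real.sqrt (1 - δ) * Real.sqrt (1 - 2 * δ / τ3) ≤
          ρ * ((inner ℂ z₀' x : ℂ)).re :=
        mul_le_mul hρs hRe (Real.sqrt_nonneg _) hρ.le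
      nlinarith
    calc (⨅ θ : ℝ, ‖z₀ - Complex.exp (θ * Complex.I) • x‖ ^ 2)
        ≤ ‖z₀ - Complex.exp ((0:ℝ) * Complex.I) • x‖ ^ 2 := ciInf_le hbdd 0
      _ ≤ _ := key
  · -- elementary real inequality
    have h1 : 1 - δ ≤ Real.sqrt (1 - δ) := by
      nlinarith [Real.sq_sqrt ha0, Real.sqrt_nonneg (1 - δ),
        Real.sqrt_le_one.mpr (by linarith : 1 - δ ≤ 1)]
    have h2 : 1 - 2 * δ / τ3 ≤ Real.sqrt (1 - 2 * δ / τ3) := by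
      nlinarith [Real.sq_sqrt hb0, Real.sqrt_nonneg (1 - 2 * δ / τ3),
        Real.sqrt_le_one.mpr (by have h := div_nonneg (by linarith : (0:ℝ) ≤ 2 * δ) hτ3.le; linarith : 1 - 2 * δ / τ3 ≤ 1)]
    have hprod : (1 - δ) * (1 - 2 * δ / τ3) ≤
        Real.sqrt (1 - δ) * Real.sqrt (1 - 2 * δ / τ3) :=
      mul_le_mul h1 h2 hb0 (Real.sqrt_nonneg _)
    have hdt : 0 ≤ δ * (2 * δ / τ3) :=
      mul_nonneg hδ0.le (div_nonneg (by linarith) hτ3.le)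
    have hx2 : 1 - δ - 2 * δ / τ3 ≤ (1 - δ) * (1 - 2 * δ / τ3) := by nlinarith
    have hss := le_trans hx2 hprod
    have heq : (3 + 4 / τ3) * δ = 3 * δ + 4 * (δ / τ3) := by ring
    have heq2 : 2 * δ / τ3 = 2 * (δ / τ3) := by ring
    rw [heq]
    rw [heq2] at hss
    linarith
end

section
/- Let E: ℂ^d → ℝ be differentiable (in the Wirtinger sense) and suppose that at a point z there exist constants β' > 0 and R > 0 with Re(⟨∇E(z), z − x e^{iθ(z)}⟩) ≥ (β'/8)·dist²(z,x) + (1/R)·‖∇E(z)‖². Then for any step size 0 < ξ ≤ 2/R, the gradient step z⁺ = z − ξ∇E(z) satisfies dist²(z⁺, x) ≤ (1 − ξβ'/4)·dist²(z, x). -/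
/-!
Expanding the square at the fixed phase `θz` gives
`‖v - ξ g‖² = ‖v‖² - 2ξ Re⟪g, v⟫ + ξ²‖g‖²`; the regularity condition bounds the cross term,
leaving `(1 - ξβ'/4)‖v‖² + ξ(ξ - 2/R)‖g‖²`, whose last summand is `≤ 0`. The infimum over all
phases is at most the value at `θz`.
-/

open RealInnerProductSpace in
theorem norm_sub_smul_sq_le_of_le_inner {F : Type*} [NormedAddCommGroup F]
    [InnerProductSpace ℝ F] {v g : F} {a c ξ : ℝ}
    (hreg : a * ‖v‖ ^ 2 + c * ‖g‖ ^ 2 ≤ ⟪g, v⟫) (hξ0 : 0 ≤ ξ) (hξ : ξ ≤ 2 * c) :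
    ‖v - ξ • g‖ ^ 2 ≤ (1 - 2 * ξ * a) * ‖v‖ ^ 2 := by
  have hexpand : ‖v - ξ • g‖ ^ 2 = ‖v‖ ^ 2 - 2 * ξ * ⟪g, v⟫ + ξ ^ 2 * ‖g‖ ^ 2 := by
    rw [norm_sub_sq_real, real_inner_smul_right, real_inner_comm, norm_smul, mul_pow,
      Real.norm_eq_abs, sq_abs]
    ring
  have hremainder : ξ * (ξ - 2 * c) * ‖g‖ ^ 2 ≤ 0 :=
    mul_nonpos_of_nonpos_of_nonneg (mul_nonpos_of_nonneg_of_nonpos hξ0 (by linarith))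
      (sq_nonneg _)
  nlinarith [mul_le_mul_of_nonneg_left hreg hξ0]

theorem stmt_16_general (d : ℕ) (x z g : EuclideanSpace ℂ (Fin d))
    (β' R : ℝ)
    (θz : ℝ)
    (hreg : (β' / 8) * ‖z - Complex.exp (θz * Complex.I) • x‖ ^ 2
        + (1 / R) * ‖g‖ ^ 2 ≤
      (inner ℂ g (z - Complex.exp (θz * Complex.I) • x) : ℂ).re)
    (ξ : ℝ) (hξ0 : 0 < ξ) (hξ : ξ ≤ 2 / R) :
    (⨅ θ : ℝ, ‖(z - ξ • g) - Complex.exp (θ * Complex.I) • x‖ ^ 2) ≤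
      (1 - ξ * β' / 4) * ‖z - Complex.exp (θz * Complex.I) • x‖ ^ 2 := by
  let _ := InnerProductSpace.rclikeToReal ℂ (EuclideanSpace ℂ (Fin d))
  set v := z - Complex.exp (θz * Complex.I) • x
  rw [← show inner ℝ g v = (inner ℂ g v).re from real_inner_eq_re_inner ℂ g v] at hreg
  have hstep := norm_sub_smul_sq_le_of_le_inner hreg hξ0.le (hξ.trans_eq (by ring))
  calc (⨅ θ : ℝ, ‖(z - ξ • g) - Complex.exp (θ * Complex.I) • x‖ ^ 2)
      ≤ ‖(z - ξ • g) - Complex.exp (θz * Complex.I) • x‖ ^ 2 :=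
        ciInf_le ⟨0, Set.forall_mem_range.2 fun _ => sq_nonneg _⟩ θz
    _ = ‖v - ξ • g‖ ^ 2 := by rw [sub_right_comm]
    _ ≤ (1 - ξ * β' / 4) * ‖v‖ ^ 2 := by linarith

/-- one step of gradient descent contracts the distance to `x`
under the regularity (curvature + smoothness) condition at `z`. -/
theorem stmt_16 (d : ℕ) (x z g : EuclideanSpace ℂ (Fin d))
    (β' R : ℝ) (hβ' : 0 < β') (hR : 0 < R)
    (θz : ℝ)
    (hθz : ∀ θ' : ℝ, ‖z - Complex.exp (θz * Complex.I) • x‖ ≤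
      ‖z - Complex.exp (θ' * Complex.I) • x‖)
    (hreg : (β' / 8) * ‖z - Complex.exp (θz * Complex.I) • x‖ ^ 2
        + (1 / R) * ‖g‖ ^ 2 ≤
      (inner ℂ g (z - Complex.exp (θz * Complex.I) • x) : ℂ).re)
    (ξ : ℝ) (hξ0 : 0 < ξ) (hξ : ξ ≤ 2 / R) :
    (⨅ θ : ℝ, ‖(z - ξ • g) - Complex.exp (θ * Complex.I) • x‖ ^ 2) ≤
      (1 - ξ * β' / 4) * ‖z - Complex.exp (θz * Complex.I) • x‖ ^ 2 :=
  stmt_16_general d x z g β' R θz hreg ξ hξ0 hξ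
end
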